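/- Let E, Q, J, R be real n×n matrices with EᵀQ = QᵀE, Q symmetric, Jᵀ = −J, and R = Rᵀ positive semidefinite, let B be a real n×m matrix and u : ℝ → ℝᵐ continuous, let ε ≥ 0, and set E_ε = E + εI and H_ε(ξ) = ½ ξᵀ Qᵀ E_ε ξ. Fix h ≥ 0 and x₀ ∈ ℝⁿ, and let z, v, w : ℝ → ℝⁿ be continuously differentiable functions realizing the exact Strang splitting steps: E_ε z'(t) = J Q z(t) with z(0) = x₀; E_ε v'(t) = −R Q v(t) + B u(t) with v(0) = z(h/2); and E_ε w'(t) = J Q w(t) with w(0) = v(h). With y_v(t) = Bᵀ Q v(t), the discrete dissipativity inequality holds for the exact split solution: H_ε(w(h/2)) − H_ε(x₀) ≤ ∫_0^h y_v(s)ᵀ u(s) ds. -/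

import Mathlib

/-!
Since `Qᵀ E_ε` is symmetric, the Hamiltonian changes along any differentiable curve at rate
`(Q x)ᵀ E_ε x'`. On the conservative substeps `E_ε x' = J Q x`, so the rate is `(Q x)ᵀ J (Q x) = 0`
by skew-symmetry of `J` and the Hamiltonian is conserved. On the dissipative substep the rate is
`-(Q v)ᵀ R (Q v) + y_vᵀ u ≤ y_vᵀ u`, and integrating this bound over `[0, h]` gives the claim.
-/

open Matrix

section Calculus

variable {𝕜 ι κ : Type*} [NontriviallyNormedField 𝕜] [Fintype ι]
  {x y : 𝕜 → ι → 𝕜} {x' y' : ι → 𝕜} {t : 𝕜}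

theorem HasDerivAt.dotProduct (hx : HasDerivAt x x' t) (hy : HasDerivAt y y' t) :
    HasDerivAt (fun s => x s ⬝ᵥ y s) (x' ⬝ᵥ y t + x t ⬝ᵥ y') t := by
  have := HasDerivAt.fun_sum (u := Finset.univ) fun i _ =>
    (hasDerivAt_pi.1 hx i).mul (hasDerivAt_pi.1 hy i)
  rw [Finset.sum_add_distrib] at this
  exact this

theorem HasDerivAt.const_mulVec (M : Matrix κ ι 𝕜) (hx : HasDerivAt x x' t) :
    HasDerivAt (fun s => M *ᵥ x s) (M *ᵥ x') t :=
  hasDerivAt_pi.2 fun i => by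
    have := (hasDerivAt_const t (M i)).dotProduct hx
    rw [zero_dotProduct, zero_add] at this
    exact this

end Calculus

section Algebra

variable {R ι : Type*} [Fintype ι]

theorem Matrix.IsSymm.dotProduct_mulVec_comm [CommSemiring R] {M : Matrix ι ι R} (hM : M.IsSymm)
    (v w : ι → R) : v ⬝ᵥ M *ᵥ w = w ⬝ᵥ M *ᵥ v := by
  rw [dotProduct_mulVec, dotProduct_comm, ← mulVec_transpose, hM.eq]

theorem Matrix.dotProduct_mulVec_self_eq_zero_of_transpose_eq_neg [CommRing R] [NoZeroDivisors R]
    [CharZero R] {J : Matrix ι ι R} (hJ : Jᵀ = -J) (q : ι → R) : q ⬝ᵥ J *ᵥ q = 0 := by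
  refine self_eq_neg.1 ?_
  calc q ⬝ᵥ J *ᵥ q = q ⬝ᵥ Jᵀ *ᵥ q := by rw [mulVec_transpose, dotProduct_mulVec, dotProduct_comm]
    _ = -(q ⬝ᵥ J *ᵥ q) := by rw [hJ, neg_mulVec, dotProduct_neg]

theorem Matrix.isSymm_transpose_mul_add_smul_one [CommRing R] [DecidableEq ι]
    {E Q : Matrix ι ι R} (hEQ : Eᵀ * Q = Qᵀ * E) (hQ : Qᵀ = Q) (c : R) :
    (Qᵀ * (E + c • 1)).IsSymm := by
  have hQE : (Qᵀ * E).IsSymm := by rw [IsSymm, transpose_mul, transpose_transpose, hEQ]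
  have hQt : Qᵀ.IsSymm := by rw [hQ]; exact hQ
  rw [Matrix.mul_add, Matrix.mul_smul, Matrix.mul_one]
  exact hQE.add (hQt.smul c)

end Algebra

section Energy

variable {ι : Type*} [Fintype ι] {Q E : Matrix ι ι ℝ} {x x' : ℝ → ι → ℝ} {t : ℝ}

noncomputable def hamiltonian (Q E : Matrix ι ι ℝ) (ξ : ι → ℝ) : ℝ :=
  1 / 2 * (ξ ⬝ᵥ (Qᵀ * E) *ᵥ ξ)

theorem hasDerivAt_hamiltonian (hQE : (Qᵀ * E).IsSymm) (hx : HasDerivAt x (x' t) t) :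
    HasDerivAt (fun s => hamiltonian Q E (x s)) (Q *ᵥ x t ⬝ᵥ E *ᵥ x' t) t := by
  refine ((hx.dotProduct (hx.const_mulVec (Qᵀ * E))).const_mul (1 / 2 : ℝ)).congr_deriv ?_
  rw [hQE.dotProduct_mulVec_comm (x' t), ← mulVec_mulVec, dotProduct_mulVec, vecMul_transpose]
  ring

theorem hamiltonian_eq_of_conservative {J : Matrix ι ι ℝ} (hQE : (Qᵀ * E).IsSymm) (hJ : Jᵀ = -J)
    (hx : ∀ t, HasDerivAt x (x' t) t) (hsys : ∀ t, E *ᵥ x' t = J *ᵥ (Q *ᵥ x t)) (a b : ℝ) :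
    hamiltonian Q E (x a) = hamiltonian Q E (x b) := by
  have hzero : ∀ t, HasDerivAt (fun s => hamiltonian Q E (x s)) 0 t := fun t => by
    simpa only [hsys t, dotProduct_mulVec_self_eq_zero_of_transpose_eq_neg hJ]
      using hasDerivAt_hamiltonian hQE (hx t)
  exact is_const_of_deriv_eq_zero (fun t => (hzero t).differentiableAt) (fun t => (hzero t).deriv) a b

theorem hamiltonian_sub_le_integral_supply {κ : Type*} [Fintype κ] {R : Matrix ι ι ℝ}
    {B : Matrix ι κ ℝ} {u : ℝ → κ → ℝ} {a b : ℝ} (hQE : (Qᵀ * E).IsSymm)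
    (hR : ∀ q, 0 ≤ q ⬝ᵥ R *ᵥ q) (hu : Continuous u) (hx : ∀ t, HasDerivAt x (x' t) t)
    (hsys : ∀ t, E *ᵥ x' t = -(R *ᵥ (Q *ᵥ x t)) + B *ᵥ u t) (hab : a ≤ b) :
    hamiltonian Q E (x b) - hamiltonian Q E (x a) ≤ ∫ s in a..b, Bᵀ *ᵥ (Q *ᵥ x s) ⬝ᵥ u s := by
  have hxc : Continuous x := continuous_iff_continuousAt.2 fun t => (hx t).continuousAt
  have hH := fun t => hasDerivAt_hamiltonian hQE (hx t)
  have hpower : ∀ t, Q *ᵥ x t ⬝ᵥ E *ᵥ x' t ≤ Bᵀ *ᵥ (Q *ᵥ x t) ⬝ᵥ u t := fun t => by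
    rw [hsys t, dotProduct_add, dotProduct_neg, dotProduct_mulVec (Q *ᵥ x t) B, ← mulVec_transpose]
    linarith [hR (Q *ᵥ x t)]
  refine intervalIntegral.sub_le_integral_of_hasDeriv_right_of_le hab ?_
    (fun t _ => (hH t).hasDerivWithinAt)
    (by fun_prop : Continuous fun s => Bᵀ *ᵥ (Q *ᵥ x s) ⬝ᵥ u s).integrableOn_Icc
    (fun t _ => hpower t)
  exact (continuous_iff_continuousAt.2 fun t => (hH t).continuousAt).continuousOn

end Energy

theorem phs_strang_splitting_discrete_dissipativity_general {n m : ℕ}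
    (E Q J R : Matrix (Fin n) (Fin n) ℝ) (B : Matrix (Fin n) (Fin m) ℝ)
    (hEQ : Eᵀ * Q = Qᵀ * E) (hQsym : Qᵀ = Q) (hJ : Jᵀ = -J)
    (hRpsd : ∀ v : Fin n → ℝ, 0 ≤ v ⬝ᵥ R.mulVec v)
    (u : ℝ → Fin m → ℝ) (hu : Continuous u)
    (ε : ℝ)
    (Eε : Matrix (Fin n) (Fin n) ℝ) (hEε : Eε = E + ε • (1 : Matrix (Fin n) (Fin n) ℝ))
    (Hε : (Fin n → ℝ) → ℝ)
    (hHε : Hε = fun ξ => (1 / 2 : ℝ) * (ξ ⬝ᵥ (Qᵀ * Eε).mulVec ξ))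
    (h : ℝ) (hh : 0 ≤ h) (x₀ : Fin n → ℝ)
    (z z' v v' w w' : ℝ → Fin n → ℝ)
    (hz : ∀ t : ℝ, HasDerivAt z (z' t) t)
    (hzsys : ∀ t : ℝ, Eε.mulVec (z' t) = J.mulVec (Q.mulVec (z t)))
    (hz0 : z 0 = x₀)
    (hv : ∀ t : ℝ, HasDerivAt v (v' t) t)
    (hvsys : ∀ t : ℝ, Eε.mulVec (v' t) = -(R.mulVec (Q.mulVec (v t))) + B.mulVec (u t))
    (hv0 : v 0 = z (h / 2))
    (hw : ∀ t : ℝ, HasDerivAt w (w' t) t)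
    (hwsys : ∀ t : ℝ, Eε.mulVec (w' t) = J.mulVec (Q.mulVec (w t)))
    (hw0 : w 0 = v h)
    (yv : ℝ → Fin m → ℝ)
    (hy : yv = fun t => Bᵀ.mulVec (Q.mulVec (v t))) :
    Hε (w (h / 2)) - Hε x₀ ≤ ∫ s in (0 : ℝ)..h, yv s ⬝ᵥ u s := by
  have hQE : (Qᵀ * Eε).IsSymm := hEε ▸ isSymm_transpose_mul_add_smul_one hEQ hQsym ε
  have hz_cons := hamiltonian_eq_of_conservative hQE hJ hz hzsys (h / 2) 0
  have hw_cons := hamiltonian_eq_of_conservative hQE hJ hw hwsys (h / 2) 0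
  have hv_diss := hamiltonian_sub_le_integral_supply hQE hRpsd hu hv hvsys hh
  subst hHε hy
  change hamiltonian Q Eε (w (h / 2)) - hamiltonian Q Eε x₀ ≤ _
  rwa [hw_cons, hw0, ← hz0, ← hz_cons, ← hv0]

/-- Discrete dissipativity of exact Strang splitting for the regularized
port-Hamiltonian system `E_ε x' = (J - R) Q x + B u`:  with `z, v, w` the exact
flows of the conservative step (time `h/2`), the dissipative step (time `h`)
and the conservative step (time `h/2`) chained together, one has
`H_ε(w(h/2)) - H_ε(x₀) ≤ ∫_0^h y_v(s)ᵀ u(s) ds`. -/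
theorem phs_strang_splitting_discrete_dissipativity {n m : ℕ}
    (E Q J R : Matrix (Fin n) (Fin n) ℝ) (B : Matrix (Fin n) (Fin m) ℝ)
    (hEQ : Eᵀ * Q = Qᵀ * E) (hQsym : Qᵀ = Q) (hJ : Jᵀ = -J) (hRsym : Rᵀ = R)
    (hRpsd : ∀ v : Fin n → ℝ, 0 ≤ v ⬝ᵥ R.mulVec v)
    (u : ℝ → Fin m → ℝ) (hu : Continuous u)
    (ε : ℝ) (hε : 0 ≤ ε)
    (Eε : Matrix (Fin n) (Fin n) ℝ) (hEε : Eε = E + ε • (1 : Matrix (Fin n) (Fin n) ℝ))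
    (Hε : (Fin n → ℝ) → ℝ)
    (hHε : Hε = fun ξ => (1 / 2 : ℝ) * (ξ ⬝ᵥ (Qᵀ * Eε).mulVec ξ))
    (h : ℝ) (hh : 0 ≤ h) (x₀ : Fin n → ℝ)
    (z z' v v' w w' : ℝ → Fin n → ℝ)
    (hz : ∀ t : ℝ, HasDerivAt z (z' t) t)
    (hzsys : ∀ t : ℝ, Eε.mulVec (z' t) = J.mulVec (Q.mulVec (z t)))
    (hz0 : z 0 = x₀)
    (hv : ∀ t : ℝ, HasDerivAt v (v' t) t) (hv' : Continuous v')
    (hvsys : ∀ t : ℝ, Eε.mulVec (v' t) = -(R.mulVec (Q.mulVec (v t))) + B.mulVec (u t))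
    (hv0 : v 0 = z (h / 2))
    (hw : ∀ t : ℝ, HasDerivAt w (w' t) t)
    (hwsys : ∀ t : ℝ, Eε.mulVec (w' t) = J.mulVec (Q.mulVec (w t)))
    (hw0 : w 0 = v h)
    (yv : ℝ → Fin m → ℝ)
    (hy : yv = fun t => Bᵀ.mulVec (Q.mulVec (v t))) :
    Hε (w (h / 2)) - Hε x₀ ≤ ∫ s in (0 : ℝ)..h, yv s ⬝ᵥ u s :=
  phs_strang_splitting_discrete_dissipativity_general E Q J R B hEQ hQsym hJ hRpsd u hu ε Eε hEε Hε
    hHε h hh x₀ z z' v v' w w' hz hzsys hz0 hv hvsys hv0 hw hwsys hw0 yv hy
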